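/- arXiv:1404.0370 — 2 statements merged into one kernel-verified Lean document; each statement's English description precedes it below -/
import Mathlib

section
/- Let C ⊆ ℝ^{n+1} be an unbounded convex body with non-degenerate asymptotic cone C_∞, and fix r_0 > 0. Then there exists ℓ_1 > 0, depending only on r_0 and C_∞, such that ℓ_1 r^{n+1} ≤ |\bar B_C(x,r)| ≤ ω_{n+1} r^{n+1} for every x ∈ C and every 0 < r ≤ r_0, where ω_{n+1} is the volume of the unit ball of ℝ^{n+1}. In fact one may take ℓ_1 = ω_{n+1}(δ/r_0)^{n+1}, where δ > 0 is any radius such that some Euclidean ball of radius δ is contained in C_∞ ∩ \bar B(0,r_0). -/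
open Set MeasureTheory Filter Topology Pointwise

noncomputable section

abbrev Vn (n : ℕ) := EuclideanSpace ℝ (Fin (n + 1))
abbrev En (n : ℕ) := EuclideanSpace ℝ (Fin n)

/-- Divergence of a vector field on `ℝ^{n+1}`. -/
def divergence {n : ℕ} (ξ : Vn n → Vn n) (x : Vn n) : ℝ :=
  ∑ i, fderiv ℝ ξ x (EuclideanSpace.single i 1) i

/-- The set of values `∫_E div ξ` over smooth unit vector fields `ξ` compactly supported
in `U`. -/
def perimSet {n : ℕ} (U E : Set (Vn n)) : Set ℝ :=
  {p : ℝ | ∃ ξ : Vn n → Vn n, ContDiff ℝ (⊤ : ℕ∞) ξ ∧ HasCompactSupport ξ ∧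
    tsupport ξ ⊆ U ∧ (∀ x, ‖ξ x‖ ≤ 1) ∧ p = ∫ x in E, divergence ξ x}

/-- Relative perimeter of `E` in the open set `U`. -/
def relPerimeter {n : ℕ} (U E : Set (Vn n)) : ℝ := sSup (perimSet U E)

/-- Relative perimeter of `E` in the interior of `C`. -/
def perimC {n : ℕ} (C E : Set (Vn n)) : ℝ := relPerimeter (interior C) E

/-- `E` has finite relative perimeter in the interior of `C`. -/
def HasFiniteRelPerimeter {n : ℕ} (C E : Set (Vn n)) : Prop :=
  BddAbove (perimSet (interior C) E)

/-- Isoperimetric profile of `C`. -/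
def isopProfile {n : ℕ} (C : Set (Vn n)) (v : ℝ) : ℝ :=
  sInf {p : ℝ | ∃ E, E ⊆ C ∧ MeasurableSet E ∧ volume E = ENNReal.ofReal v ∧ p = perimC C E}

/-- An unbounded convex body: a closed unbounded convex set with nonempty interior. -/
def IsUnboundedConvexBody {n : ℕ} (C : Set (Vn n)) : Prop :=
  Convex ℝ C ∧ IsClosed C ∧ ¬ Bornology.IsBounded C ∧ (interior C).Nonempty

/-- Asymptotic cone of a set containing the origin: `⋂_{λ>0} λ C`. -/
def asympCone {n : ℕ} (C : Set (Vn n)) : Set (Vn n) :=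
  ⋂ (l : ℝ) (_ : 0 < l), l • C

/-- The first `n` coordinates of a point of `ℝ^{n+1}`. -/
def front {n : ℕ} (p : Vn n) : En n :=
  (WithLp.equiv 2 (Fin n → ℝ)).symm fun i => p i.castSucc

/-- Builds a point of `ℝ^{n+1}` from a horizontal component and a height. -/
def emb {n : ℕ} (y : En n) (t : ℝ) : Vn n :=
  (WithLp.equiv 2 (Fin (n + 1) → ℝ)).symm (Fin.snoc (WithLp.equiv 2 (Fin n → ℝ) y) t)

/-- Radial function of a set with respect to the origin. -/
def radialFn {n : ℕ} (A : Set (En n)) (u : En n) : ℝ :=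
  sSup {l : ℝ | 0 ≤ l ∧ l • u ∈ A}

/-- `K` is a cone with vertex `vtx`. -/
def IsConeWithVertex {n : ℕ} (K : Set (Vn n)) (vtx : Vn n) : Prop :=
  ∀ x ∈ K, ∀ l : ℝ, 0 ≤ l → vtx + l • (x - vtx) ∈ K

/-- `C` is a conically bounded convex body with exterior asymptotic cone `K` (vertex `vtx`):
`C` is an unbounded convex body which is the epigraph of a nonnegative convex function on the
hyperplane `x_{n+1} = 0` with compact slices having nonempty interior, `K` is a non-degenerate
closed convex cone containing `C`, and the radial functions of the horizontal slices of `C`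
and `K` become uniformly close as the height tends to infinity. -/
def IsExteriorAsympCone {n : ℕ} (C K : Set (Vn n)) (vtx : Vn n) : Prop :=
  IsUnboundedConvexBody C ∧
  (∃ f : En n → ℝ, ConvexOn ℝ univ f ∧ (∀ y, 0 ≤ f y) ∧
      C = {p : Vn n | f (front p) ≤ p (Fin.last n)} ∧
      (∀ t : ℝ, 0 ≤ t → IsCompact {y : En n | f y ≤ t} ∧ Convex ℝ {y : En n | f y ≤ t} ∧
        (interior {y : En n | f y ≤ t}).Nonempty)) ∧
  IsClosed K ∧ Convex ℝ K ∧ (interior K).Nonempty ∧ IsConeWithVertex K vtx ∧ C ⊆ K ∧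
  Tendsto (fun t : ℝ => ⨆ u : Metric.sphere (0 : En n) 1,
      |radialFn {y : En n | emb y t ∈ C} u - radialFn {y : En n | emb y t ∈ K} u|)
    atTop (𝓝 0)

/-- A conically bounded convex body. -/
def IsConicallyBounded {n : ℕ} (C : Set (Vn n)) : Prop :=
  ∃ K vtx, IsExteriorAsympCone C K vtx

/-- `S` is, near `p`, the zero set of a `C^k` defining function with nonvanishing
differential, i.e. a `C^k` hypersurface near `p`. -/
def IsHypersurfaceAt {n : ℕ} (k : ℕ∞) (S : Set (Vn n)) (p : Vn n) : Prop :=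
  ∃ (U : Set (Vn n)) (F : Vn n → ℝ), IsOpen U ∧ p ∈ U ∧ ContDiff ℝ k F ∧
    (∀ x ∈ U, fderiv ℝ F x ≠ 0) ∧ S ∩ U = {x ∈ U | F x = 0}

/-- A regular conically bounded convex body: the boundary of `C` is a smooth hypersurface and
the boundary of its (exterior) asymptotic cone is smooth away from the vertex. -/
def IsRegularConicallyBounded {n : ℕ} (C : Set (Vn n)) : Prop :=
  ∃ K vtx, IsExteriorAsympCone C K vtx ∧
    (∀ p ∈ frontier C, IsHypersurfaceAt ⊤ (frontier C) p) ∧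
    (∀ p ∈ frontier K, p ≠ vtx → IsHypersurfaceAt ⊤ (frontier K) p)

/-- A closed half-space of `ℝ^{n+1}`. -/
def halfSpace (n : ℕ) : Set (Vn n) := {x : Vn n | 0 ≤ x (Fin.last n)}

/-!
For a closed convex set `C`, the asymptotic cone is the recession cone: `x + C_∞ ⊆ C` for every
`x ∈ C`, and `C_∞` is invariant under positive dilations. Hence if `B̄(y, δ) ⊆ C_∞ ∩ B̄(0, r₀)`,
dilating by `r / r₀` and translating by `x` places the ball `B̄(x + (r/r₀) y, δ r / r₀)` inside
`C ∩ B̄(x, r)`, which gives the lower bound; the upper bound is `|C ∩ B̄(x,r)| ≤ |B̄(x,r)|`.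
-/

section AsymptoticCone

open Metric

variable {n : ℕ} {C : Set (Vn n)}

lemma asympCone_subset : asympCone C ⊆ C := fun _ hz => by
  simpa using mem_iInter₂.1 hz 1 one_pos

lemma smul_asympCone_subset {s : ℝ} (hs : 0 < s) : s • asympCone C ⊆ asympCone C := by
  rintro _ ⟨z, hz, rfl⟩
  simp only [asympCone, mem_iInter] at hz ⊢
  intro l hl
  have hsl : s • (l / s) • C = l • C := by rw [smul_smul, mul_div_cancel₀ _ hs.ne']
  exact hsl ▸ smul_mem_smul_set (hz (l / s) (div_pos hl hs))

lemma smul_mem_asympCone {z : Vn n} (hz : z ∈ asympCone C) {s : ℝ} (hs : 0 < s) :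
    s • z ∈ asympCone C :=
  smul_asympCone_subset hs (smul_mem_smul_set hz)

lemma add_mem_of_mem_asympCone (hconv : Convex ℝ C) (hcl : IsClosed C) {x z : Vn n}
    (hx : x ∈ C) (hz : z ∈ asympCone C) : x + z ∈ C := by
  have hseg : ∀ τ ∈ Ioc (0 : ℝ) 1, (1 - τ) • x + z ∈ C := by
    rintro τ ⟨hτ0, hτ1⟩
    have hz' : τ⁻¹ • z ∈ C := asympCone_subset (smul_mem_asympCone hz (inv_pos.2 hτ0))
    simpa [smul_smul, mul_inv_cancel₀ hτ0.ne'] using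
      hconv hx hz' (sub_nonneg.2 hτ1) hτ0.le (sub_add_cancel 1 τ)
  have hlim : Tendsto (fun τ : ℝ => (1 - τ) • x + z) (𝓝[>] 0) (𝓝 (x + z)) := by
    have hcont : Continuous fun τ : ℝ => (1 - τ) • x + z := by fun_prop
    simpa using (hcont.tendsto 0).mono_left nhdsWithin_le_nhds
  exact hcl.mem_of_tendsto hlim (mem_of_superset (Ioc_mem_nhdsGT one_pos) hseg)

lemma vadd_asympCone_subset (hconv : Convex ℝ C) (hcl : IsClosed C) {x : Vn n} (hx : x ∈ C) :
    x +ᵥ asympCone C ⊆ C := by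
  rintro _ ⟨z, hz, rfl⟩
  exact add_mem_of_mem_asympCone hconv hcl hx hz

lemma closedBall_subset_inter_closedBall_of_subset_asympCone (hconv : Convex ℝ C)
    (hcl : IsClosed C) {x y : Vn n} (hx : x ∈ C) {δ R s : ℝ} (hs : 0 < s)
    (hy : closedBall y δ ⊆ asympCone C ∩ closedBall 0 R) :
    closedBall (x + s • y) (s * δ) ⊆ C ∩ closedBall x (s * R) := by
  have hball (c : Vn n) (ρ : ℝ) : x +ᵥ s • closedBall c ρ = closedBall (x + s • c) (s * ρ) := by
    rw [smul_closedBall' hs.ne', vadd_closedBall, Real.norm_of_nonneg hs.le, vadd_eq_add]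
  calc closedBall (x + s • y) (s * δ) = x +ᵥ s • closedBall y δ := (hball y δ).symm
    _ ⊆ x +ᵥ s • (asympCone C ∩ closedBall (0 : Vn n) R) := vadd_set_mono (smul_set_mono hy)
    _ ⊆ (x +ᵥ s • asympCone C) ∩ (x +ᵥ s • closedBall (0 : Vn n) R) :=
      (vadd_set_mono smul_set_inter_subset).trans vadd_set_inter.subset
    _ ⊆ C ∩ closedBall x (s * R) := by
      rw [hball, smul_zero, add_zero]
      exact inter_subset_inter_left _
        ((vadd_set_mono (smul_asympCone_subset hs)).trans (vadd_asympCone_subset hconv hcl hx))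

lemma exists_closedBall_subset_asympCone_inter_closedBall
    (hnd : (interior (asympCone C)).Nonempty) {R : ℝ} (hR : 0 < R) :
    ∃ δ > 0, ∃ y, closedBall y δ ⊆ asympCone C ∩ closedBall 0 R := by
  obtain ⟨y, hy⟩ := hnd
  obtain ⟨ε, hε, hyε⟩ := nhds_basis_closedBall.mem_iff.1 (mem_interior_iff_mem_nhds.1 hy)
  set t := ‖y‖ + ε
  have hs : 0 < R / t := by positivity
  have hyt : closedBall y ε ⊆ closedBall 0 t :=
    closedBall_subset_closedBall' (by simp [t, add_comm])
  refine ⟨R / t * ε, by positivity, (R / t) • y, ?_⟩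
  calc closedBall ((R / t) • y) (R / t * ε) = (R / t) • closedBall y ε := by
        rw [smul_closedBall' hs.ne', Real.norm_of_nonneg hs.le]
    _ ⊆ (R / t) • asympCone C ∩ (R / t) • closedBall (0 : Vn n) t :=
      (smul_set_mono (subset_inter hyε hyt)).trans smul_set_inter_subset
    _ ⊆ asympCone C ∩ closedBall 0 R := by
      rw [smul_closedBall' hs.ne', smul_zero, Real.norm_of_nonneg hs.le,
        div_mul_cancel₀ R (by positivity)]
      exact inter_subset_inter_left _ (smul_asympCone_subset hs)

end AsymptoticCone

section Volume

open Metric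

lemma measureReal_inter_closedBall_le {E : Type*} [NormedAddCommGroup E] [NormedSpace ℝ E]
    [MeasurableSpace E] [BorelSpace E] [FiniteDimensional ℝ E] (μ : Measure E)
    [μ.IsAddHaarMeasure] (s : Set E) (x : E) {r : ℝ} (hr : 0 ≤ r) :
    μ.real (s ∩ closedBall x r) ≤ μ.real (ball 0 1) * r ^ Module.finrank ℝ E :=
  calc μ.real (s ∩ closedBall x r) ≤ μ.real (closedBall x r) :=
        measureReal_mono inter_subset_right measure_closedBall_lt_top.ne
    _ = μ.real (ball 0 1) * r ^ Module.finrank ℝ E := by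
        rw [Measure.addHaar_real_closedBall μ x hr, mul_comm]

lemma le_measureReal_inter_closedBall_of_subset_asympCone {n : ℕ} {C : Set (Vn n)}
    (hconv : Convex ℝ C) (hcl : IsClosed C) {x y : Vn n} (hx : x ∈ C) {δ R r : ℝ}
    (hδ : 0 ≤ δ) (hR : 0 < R) (hr : 0 < r) (hy : closedBall y δ ⊆ asympCone C ∩ closedBall 0 R) :
    volume.real (ball (0 : Vn n) 1) * (δ / R) ^ (n + 1) * r ^ (n + 1)
      ≤ volume.real (C ∩ closedBall x r) := by
  have hs : 0 < r / R := div_pos hr hR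
  have hsub := closedBall_subset_inter_closedBall_of_subset_asympCone hconv hcl hx hs hy
  rw [div_mul_cancel₀ r hR.ne'] at hsub
  calc volume.real (ball (0 : Vn n) 1) * (δ / R) ^ (n + 1) * r ^ (n + 1)
      = volume.real (closedBall (x + (r / R) • y) (r / R * δ)) := by
        rw [Measure.addHaar_real_closedBall _ _ (by positivity), finrank_euclideanSpace_fin]
        ring
    _ ≤ volume.real (C ∩ closedBall x r) :=
        measureReal_mono hsub ((measure_mono inter_subset_right).trans_lt
          measure_closedBall_lt_top).ne

end Volume

theorem volume_intrinsic_balls_ahlfors_general (n : ℕ) (C : Set (Vn n))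
    (hC : IsUnboundedConvexBody C)
    (hnd : (interior (asympCone C)).Nonempty) (r0 : ℝ) (hr0 : 0 < r0) :
    (∃ l1 : ℝ, 0 < l1 ∧ ∀ x ∈ C, ∀ r : ℝ, 0 < r → r ≤ r0 →
      l1 * r ^ (n + 1) ≤ (volume (C ∩ Metric.closedBall x r)).toReal ∧
      (volume (C ∩ Metric.closedBall x r)).toReal
        ≤ (volume (Metric.ball (0 : Vn n) 1)).toReal * r ^ (n + 1)) ∧
    ∀ δ : ℝ, 0 < δ →
      (∃ y : Vn n, Metric.closedBall y δ ⊆ asympCone C ∩ Metric.closedBall 0 r0) →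
      ∀ x ∈ C, ∀ r : ℝ, 0 < r → r ≤ r0 →
        (volume (Metric.ball (0 : Vn n) 1)).toReal * (δ / r0) ^ (n + 1) * r ^ (n + 1)
          ≤ (volume (C ∩ Metric.closedBall x r)).toReal := by
  obtain ⟨hconv, hcl, -, -⟩ := hC
  have lower : ∀ δ : ℝ, 0 < δ →
      (∃ y : Vn n, Metric.closedBall y δ ⊆ asympCone C ∩ Metric.closedBall 0 r0) →
      ∀ x ∈ C, ∀ r : ℝ, 0 < r → r ≤ r0 →
        volume.real (Metric.ball (0 : Vn n) 1) * (δ / r0) ^ (n + 1) * r ^ (n + 1)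
          ≤ volume.real (C ∩ Metric.closedBall x r) := fun δ hδ ⟨y, hy⟩ x hx r hr _ =>
    le_measureReal_inter_closedBall_of_subset_asympCone hconv hcl hx hδ.le hr0 hr hy
  obtain ⟨δ, hδ, hball⟩ := exists_closedBall_subset_asympCone_inter_closedBall hnd hr0
  have hω : 0 < volume.real (Metric.ball (0 : Vn n) 1) :=
    ENNReal.toReal_pos (Metric.measure_ball_pos volume 0 one_pos).ne' measure_ball_lt_top.ne
  refine ⟨⟨_, by positivity, fun x hx r hr hrr0 => ⟨lower δ hδ hball x hx r hr hrr0, ?_⟩⟩, lower⟩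
  have upper := measureReal_inter_closedBall_le volume C x hr.le
  rwa [finrank_euclideanSpace_fin] at upper

/-- Ahlfors regularity of small intrinsic balls: for an unbounded convex
body `C` with non-degenerate asymptotic cone and `r₀ > 0`, there is `ℓ₁ > 0` with
`ℓ₁ r^{n+1} ≤ |B̄_C(x,r)| ≤ ω_{n+1} r^{n+1}` for all `x ∈ C` and `0 < r ≤ r₀`; in fact any
`ℓ₁ = ω_{n+1}(δ/r₀)^{n+1}` works, where a ball of radius `δ` fits inside
`C_∞ ∩ B̄(0,r₀)`. -/
theorem volume_intrinsic_balls_ahlfors (n : ℕ) (C : Set (Vn n))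
    (hC : IsUnboundedConvexBody C) (h0 : (0 : Vn n) ∈ C)
    (hnd : (interior (asympCone C)).Nonempty) (r0 : ℝ) (hr0 : 0 < r0) :
    (∃ l1 : ℝ, 0 < l1 ∧ ∀ x ∈ C, ∀ r : ℝ, 0 < r → r ≤ r0 →
      l1 * r ^ (n + 1) ≤ (volume (C ∩ Metric.closedBall x r)).toReal ∧
      (volume (C ∩ Metric.closedBall x r)).toReal
        ≤ (volume (Metric.ball (0 : Vn n) 1)).toReal * r ^ (n + 1)) ∧
    ∀ δ : ℝ, 0 < δ →
      (∃ y : Vn n, Metric.closedBall y δ ⊆ asympCone C ∩ Metric.closedBall 0 r0) →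
      ∀ x ∈ C, ∀ r : ℝ, 0 < r → r ≤ r0 →
        (volume (Metric.ball (0 : Vn n) 1)).toReal * (δ / r0) ^ (n + 1) * r ^ (n + 1)
          ≤ (volume (C ∩ Metric.closedBall x r)).toReal :=
  volume_intrinsic_balls_ahlfors_general n C hC hnd r0 hr0

end
end

section
/- Let C ⊆ ℝ^{n+1} be an unbounded convex body. Then for every x ∈ C and every r > 0, the intrinsic balls satisfy |B_C(x,2r)| ≤ (2^{n+1} + 1) |B_C(x,r)|. In particular, C with the Euclidean metric and Lebesgue measure is a doubling metric measure space with doubling constant depending only on n. -/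
/-!
Contracting the convex set `C` towards `x ∈ C` by the factor `1/2` maps `C ∩ B(x, 2r)` into
`C ∩ B(x, r)`. Hence `C ∩ B(x, 2r)` lies in the image of `C ∩ B(x, r)` under the homothety of
ratio `2` centred at `x`, whose volume is `2^{n+1}` times that of `C ∩ B(x, r)`.
-/

open Set MeasureTheory Filter Topology Pointwise

noncomputable section

section ConvexDoubling

open AffineMap Metric Module

variable {E : Type*} [NormedAddCommGroup E] [NormedSpace ℝ E] {s : Set E} {x : E} {c : ℝ}

theorem Convex.inter_ball_subset_image_homothety (hs : Convex ℝ s) (hx : x ∈ s) (hc : 1 ≤ c)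
    (r : ℝ) : s ∩ ball x (c * r) ⊆ homothety x c '' (s ∩ ball x r) := by
  rintro y ⟨hys, hyr⟩
  have hc₀ : 0 < c := by linarith
  refine ⟨homothety x c⁻¹ y, ⟨?_, ?_⟩, ?_⟩
  · rw [homothety_eq_lineMap]
    exact hs.lineMap_mem hx hys ⟨inv_nonneg.2 hc₀.le, inv_le_one_of_one_le₀ hc⟩
  · rw [mem_ball, dist_homothety_center, Real.norm_of_nonneg (inv_nonneg.2 hc₀.le),
      inv_mul_lt_iff₀ hc₀, dist_comm]
    exact hyr
  · rw [← homothety_mul_apply, mul_inv_cancel₀ hc₀.ne', homothety_one, id_apply]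

theorem Convex.addHaar_inter_ball_le [FiniteDimensional ℝ E] [MeasurableSpace E] [BorelSpace E]
    (μ : Measure E) [μ.IsAddHaarMeasure] (hs : Convex ℝ s) (hx : x ∈ s) (hc : 1 ≤ c) (r : ℝ) :
    μ (s ∩ ball x (c * r)) ≤ ENNReal.ofReal (c ^ finrank ℝ E) * μ (s ∩ ball x r) :=
  calc μ (s ∩ ball x (c * r))
      ≤ μ (homothety x c '' (s ∩ ball x r)) :=
        measure_mono (hs.inter_ball_subset_image_homothety hx hc r)
    _ = ENNReal.ofReal (c ^ finrank ℝ E) * μ (s ∩ ball x r) := by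
        rw [Measure.addHaar_image_homothety, abs_of_nonneg (by positivity)]

end ConvexDoubling

/-- An unbounded convex body is a doubling metric measure space:
`|B_C(x,2r)| ≤ (2^{n+1}+1)|B_C(x,r)|` for every `x ∈ C` and `r > 0`. -/
theorem unboundedConvexBody_doubling (n : ℕ) (C : Set (Vn n))
    (hC : IsUnboundedConvexBody C) :
    ∀ x ∈ C, ∀ r : ℝ, 0 < r →
      volume (C ∩ Metric.ball x (2 * r)) ≤
        ((2 : ENNReal) ^ (n + 1) + 1) * volume (C ∩ Metric.ball x r) := by
  intro x hx r _
  calc volume (C ∩ Metric.ball x (2 * r))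
      ≤ ENNReal.ofReal (2 ^ Module.finrank ℝ (Vn n)) * volume (C ∩ Metric.ball x r) :=
        hC.1.addHaar_inter_ball_le volume hx one_le_two r
    _ = 2 ^ (n + 1) * volume (C ∩ Metric.ball x r) := by
        rw [finrank_euclideanSpace_fin, ENNReal.ofReal_pow zero_le_two, ENNReal.ofReal_ofNat]
    _ ≤ (2 ^ (n + 1) + 1) * volume (C ∩ Metric.ball x r) := by
        gcongr
        exact le_self_add

end
end
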